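/- arXiv:2402.07316 — 2 statements merged into one kernel-verified Lean document; each statement's English description precedes it below -/
import Mathlib

section
/- Suppose x₁,…,xₙ : ℝ → ℝ² are differentiable and solve the point vortex ODE x_i'(t) = Σ_{j≠i} m_j K(x_i(t), x_j(t)) on an interval I, with x_i(t) ≠ x_j(t) for i ≠ j on I. Then the second moment I(t) = Σ_i m_i |x_i(t)|² is constant on I. -/
open scoped RealInnerProductSpace

noncomputable def perp (z : EuclideanSpace ℝ (Fin 2)) : EuclideanSpace ℝ (Fin 2) :=
  WithLp.toLp 2 (fun i : Fin 2 => if i = 0 then -(z 1) else z 0)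

noncomputable def K (x y : EuclideanSpace ℝ (Fin 2)) : EuclideanSpace ℝ (Fin 2) :=
  (‖x - y‖ ^ 2)⁻¹ • perp (x - y)

/-!
Along the flow, `d/dt ∑ᵢ mᵢ ‖xᵢ‖² = 2 ∑ᵢ ∑_{j ≠ i} mᵢ mⱼ ⟪xᵢ, K(xᵢ, xⱼ)⟫`. Since `K` is antisymmetric,
the terms `(i, j)` and `(j, i)` add up to `mᵢ mⱼ ⟪xᵢ - xⱼ, K(xᵢ, xⱼ)⟫`, which vanishes because
`K(x, y)` is a multiple of `(x - y)^⊥`. A function with zero derivative on an interval is constant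
there by the mean value inequality.
-/

namespace Finset

theorem sum_sum_erase_eq_zero_of_antisymm {ι M : Type*} [DecidableEq ι] [AddCommMonoid M]
    (s : Finset ι) (f : ι → ι → M) (hf : ∀ i ∈ s, ∀ j ∈ s, i ≠ j → f i j + f j i = 0) :
    ∑ i ∈ s, ∑ j ∈ s.erase i, f i j = 0 := by
  rw [← sum_finset_product' s.offDiag s (fun i => s.erase i)
    (by simp only [mem_offDiag, mem_erase]; tauto)]
  refine sum_involution (fun p _ => p.swap) (fun p hp => ?_) (fun p hp _ => ?_)
    (fun p hp => by simpa [and_left_comm, ne_comm] using hp) (fun p _ => p.swap_swap)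
  · rw [mem_offDiag] at hp
    exact hf _ hp.1 _ hp.2.1 hp.2.2
  · rw [mem_offDiag] at hp
    exact fun h => hp.2.2 (Prod.ext_iff.1 h).2

end Finset

theorem inner_perp_self (z : EuclideanSpace ℝ (Fin 2)) : ⟪z, perp z⟫ = 0 := by
  simp [PiLp.inner_apply, perp, Fin.sum_univ_two, mul_comm]

theorem K_swap (a b : EuclideanSpace ℝ (Fin 2)) : K b a = -K a b := by
  have perp_sub_swap : perp (b - a) = -perp (a - b) := by
    ext i; fin_cases i <;> simp [perp]
  rw [K, K, perp_sub_swap, ← neg_sub a b, norm_neg, smul_neg]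

theorem inner_K_add_inner_K_swap (a b : EuclideanSpace ℝ (Fin 2)) :
    ⟪a, K a b⟫ + ⟪b, K b a⟫ = 0 := by
  rw [K_swap a b, inner_neg_right, ← sub_eq_add_neg, ← inner_sub_left, K, inner_smul_right,
    inner_perp_self, mul_zero]

theorem sum_mul_inner_vortex_velocity_eq_zero {ι : Type*} [Fintype ι] [DecidableEq ι]
    (m : ι → ℝ) (z : ι → EuclideanSpace ℝ (Fin 2)) :
    ∑ i, m i * ⟪z i, ∑ j ∈ Finset.univ.erase i, m j • K (z i) (z j)⟫ = 0 := by
  simp only [inner_sum, inner_smul_right, Finset.mul_sum]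
  refine Finset.sum_sum_erase_eq_zero_of_antisymm _ _ fun i _ j _ _ => ?_
  linear_combination m i * m j * inner_K_add_inner_K_swap (z i) (z j)

theorem Set.OrdConnected.eq_of_hasDerivWithinAt_eq_zero {E : Type*} [NormedAddCommGroup E]
    [NormedSpace ℝ E] {f : ℝ → E} {I : Set ℝ} (hI : I.OrdConnected)
    (hf : ∀ t ∈ I, HasDerivWithinAt f 0 I t) {s t : ℝ} (hs : s ∈ I) (ht : t ∈ I) :
    f s = f t := by
  have := hI.convex.norm_image_sub_le_of_norm_hasDerivWithin_le hf (fun _ _ => norm_zero.le) hs ht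
  rwa [zero_mul, norm_le_zero_iff, sub_eq_zero, eq_comm] at this

theorem second_moment_conserved_general (n : ℕ) (m : Fin n → ℝ)
    (x : Fin n → ℝ → EuclideanSpace ℝ (Fin 2)) (I : Set ℝ) (hI : I.OrdConnected)
    (hode : ∀ t ∈ I, ∀ i, HasDerivWithinAt (x i)
      (∑ j ∈ Finset.univ.erase i, m j • K (x i t) (x j t)) I t) :
    ∀ s ∈ I, ∀ t ∈ I, ∑ i, m i * ‖x i s‖ ^ 2 = ∑ i, m i * ‖x i t‖ ^ 2 := by
  refine fun s hs t ht => hI.eq_of_hasDerivWithinAt_eq_zero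
    (f := fun u => ∑ i, m i * ‖x i u‖ ^ 2) (fun u hu => ?_) hs ht
  convert HasDerivWithinAt.fun_sum fun i _ => ((hode u hu i).norm_sq).const_mul (m i) using 1
  simp_rw [mul_left_comm (m _) 2, ← Finset.mul_sum, sum_mul_inner_vortex_velocity_eq_zero,
    mul_zero]

theorem second_moment_conserved (n : ℕ) (m : Fin n → ℝ) (hm : ∀ i, m i ≠ 0)
    (x : Fin n → ℝ → EuclideanSpace ℝ (Fin 2)) (I : Set ℝ) (hI : I.OrdConnected)
    (hsep : ∀ t ∈ I, ∀ i j, i ≠ j → x i t ≠ x j t)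
    (hode : ∀ t ∈ I, ∀ i, HasDerivWithinAt (x i)
      (∑ j ∈ Finset.univ.erase i, m j • K (x i t) (x j t)) I t) :
    ∀ s ∈ I, ∀ t ∈ I, ∑ i, m i * ‖x i s‖ ^ 2 = ∑ i, m i * ‖x i t‖ ^ 2 :=
  second_moment_conserved_general n m x I hI hode
end

section
/- Let m₁ < 0 and m₂,…,mₖ > 0 with −m₁ > m₂ + ⋯ + mₖ, and let x₁,…,xₖ ∈ ℝ². Then there is a constant c > 0 depending only on the masses such that Σ_{1≤i<j≤k} mᵢmⱼ|xᵢ−xⱼ|² ≤ −c · Σ_{i=2}^k |xᵢ − x₁|². In particular Ĩ_S = Σ_{i<j} mᵢmⱼ|xᵢ−xⱼ|² is nonpositive, and vanishes only when all points coincide. -/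
/-!
For every base point `z` and total mass `M = ∑ mᵢ`, Lagrange's identity
`∑_{i<j} mᵢ mⱼ ‖xᵢ - xⱼ‖² = M ∑ mᵢ ‖xᵢ - z‖² - ‖∑ mᵢ (xᵢ - z)‖²`
bounds the left side by `M ∑ mᵢ ‖xᵢ - z‖²` as soon as `M ≤ 0`. Here `M < 0` because the negative
mass dominates; taking `z = x 0` removes the term of the negative mass, and bounding the positive
masses below by their minimum `μ` gives the constant `c = -M μ`.
-/

open Finset RealInnerProductSpace

theorem Finset.exists_gt_forall_le {ι α : Type*} [LinearOrder α] [NoMaxOrder α] (s : Finset ι)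
    (f : ι → α) {a : α} (h : ∀ i ∈ s, a < f i) : ∃ c > a, ∀ i ∈ s, c ≤ f i := by
  rcases s.eq_empty_or_nonempty with rfl | hs
  · simpa using exists_gt a
  · exact ⟨s.inf' hs f, (lt_inf'_iff hs).2 h, fun i hi => inf'_le f hi⟩

theorem Finset.sum_sum_eq_two_nsmul_sum_filter_lt {ι M : Type*} [Fintype ι] [LinearOrder ι]
    [AddCommMonoid M] (f : ι → ι → M) (hf : ∀ i j, f i j = f j i) (hdiag : ∀ i, f i i = 0) :
    ∑ i, ∑ j, f i j = 2 • ∑ p ∈ univ.filter (fun p : ι × ι => p.1 < p.2), f p.1 p.2 := by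
  have hgt : ∑ p ∈ univ.filter (fun p : ι × ι => ¬ p.1 < p.2), f p.1 p.2
      = ∑ p ∈ univ.filter (fun p : ι × ι => p.2 < p.1), f p.1 p.2 := by
    refine (sum_subset (fun p => by simpa using le_of_lt) fun p hp hlt => ?_).symm
    simp only [mem_filter, mem_univ, true_and, not_lt] at hp hlt
    rw [le_antisymm hlt hp, hdiag]
  have hswap : ∑ p ∈ univ.filter (fun p : ι × ι => p.2 < p.1), f p.1 p.2
      = ∑ p ∈ univ.filter (fun p : ι × ι => p.1 < p.2), f p.1 p.2 :=
    sum_equiv (Equiv.prodComm ι ι) (by simp) fun p _ => hf _ _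
  rw [← Fintype.sum_prod_type', ← sum_filter_add_sum_filter_not univ (fun p : ι × ι => p.1 < p.2),
    hgt, hswap, two_nsmul]

theorem eq_of_sum_erase_norm_sub_sq_nonpos {ι E : Type*} [Fintype ι] [DecidableEq ι]
    [NormedAddCommGroup E] (x : ι → E) (i₀ : ι)
    (h : ∑ i ∈ univ.erase i₀, ‖x i - x i₀‖ ^ 2 ≤ 0) (i j : ι) : x i = x j := by
  have hzero := (sum_eq_zero_iff_of_nonneg fun i _ => sq_nonneg ‖x i - x i₀‖).1
    (h.antisymm (sum_nonneg fun i _ => sq_nonneg _))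
  have hbase : ∀ i, x i = x i₀ := fun i => by
    rcases eq_or_ne i i₀ with rfl | hi
    · rfl
    · simpa [sub_eq_zero] using hzero i (mem_erase.2 ⟨hi, mem_univ i⟩)
  rw [hbase i, hbase j]

variable {ι E : Type*} [Fintype ι] [NormedAddCommGroup E] [InnerProductSpace ℝ E]

theorem sum_sum_mul_mul_norm_sub_sq (m : ι → ℝ) (y : ι → E) :
    ∑ i, ∑ j, m i * m j * ‖y i - y j‖ ^ 2
      = 2 * ((∑ i, m i) * ∑ i, m i * ‖y i‖ ^ 2 - ‖∑ i, m i • y i‖ ^ 2) := by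
  have hsq : (∑ i, m i) * ∑ i, m i * ‖y i‖ ^ 2 = ∑ i, ∑ j, m i * (m j * ‖y j‖ ^ 2) :=
    sum_mul_sum _ _ _ _
  have hcross : ‖∑ i, m i • y i‖ ^ 2 = ∑ i, ∑ j, m i * (m j * ⟪y i, y j⟫) := by
    simp only [← real_inner_self_eq_norm_sq, sum_inner, inner_sum, real_inner_smul_left,
      real_inner_smul_right]
    rw [sum_comm]
    exact sum_congr rfl fun i _ => sum_congr rfl fun j _ => mul_left_comm _ _ _
  calc ∑ i, ∑ j, m i * m j * ‖y i - y j‖ ^ 2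
      = ∑ i, ∑ j, (m i * (m j * ‖y j‖ ^ 2) + m j * (m i * ‖y i‖ ^ 2)
          - m i * (m j * ⟪y i, y j⟫) * 2) :=
        sum_congr rfl fun i _ => sum_congr rfl fun j _ => by rw [norm_sub_sq_real]; ring
    _ = 2 * ((∑ i, m i) * ∑ i, m i * ‖y i‖ ^ 2 - ‖∑ i, m i • y i‖ ^ 2) := by
        simp only [sum_add_distrib, sum_sub_distrib, ← sum_mul]
        rw [← mul_sum, ← hsq, hcross]
        ring

theorem sum_filter_lt_mul_mul_norm_sub_sq [LinearOrder ι] (m : ι → ℝ) (x : ι → E) (z : E) :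
    ∑ p ∈ univ.filter (fun p : ι × ι => p.1 < p.2), m p.1 * m p.2 * ‖x p.1 - x p.2‖ ^ 2
      = (∑ i, m i) * ∑ i, m i * ‖x i - z‖ ^ 2 - ‖∑ i, m i • (x i - z)‖ ^ 2 := by
  have hhalf := sum_sum_eq_two_nsmul_sum_filter_lt (fun i j => m i * m j * ‖x i - x j‖ ^ 2)
    (fun i j => by rw [norm_sub_rev]; ring) (fun i => by simp)
  have hexpand := sum_sum_mul_mul_norm_sub_sq m (fun i => x i - z)
  simp only [sub_sub_sub_cancel_right] at hexpand
  rw [two_nsmul] at hhalf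
  linarith

theorem sum_filter_lt_mul_mul_norm_sub_sq_le [LinearOrder ι] (m : ι → ℝ) (x : ι → E) (z : E) :
    ∑ p ∈ univ.filter (fun p : ι × ι => p.1 < p.2), m p.1 * m p.2 * ‖x p.1 - x p.2‖ ^ 2
      ≤ (∑ i, m i) * ∑ i, m i * ‖x i - z‖ ^ 2 := by
  rw [sum_filter_lt_mul_mul_norm_sub_sq m x z]
  exact sub_le_self _ (sq_nonneg _)

theorem Itilde_negative_definite_general (k : ℕ) (m : Fin (k + 1) → ℝ)
    (hm : ∀ i, i ≠ 0 → 0 < m i)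
    (hbig : -m 0 > ∑ i ∈ Finset.univ.erase 0, m i) :
    ∃ c > (0 : ℝ), ∀ x : Fin (k + 1) → EuclideanSpace ℝ (Fin 2),
      (∑ p ∈ Finset.univ.filter (fun p : Fin (k + 1) × Fin (k + 1) => p.1 < p.2),
          m p.1 * m p.2 * ‖x p.1 - x p.2‖ ^ 2
        ≤ -c * ∑ i ∈ Finset.univ.erase 0, ‖x i - x 0‖ ^ 2) ∧
      (∑ p ∈ Finset.univ.filter (fun p : Fin (k + 1) × Fin (k + 1) => p.1 < p.2),
          m p.1 * m p.2 * ‖x p.1 - x p.2‖ ^ 2 ≤ 0) ∧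
      ((∑ p ∈ Finset.univ.filter (fun p : Fin (k + 1) × Fin (k + 1) => p.1 < p.2),
          m p.1 * m p.2 * ‖x p.1 - x p.2‖ ^ 2 = 0) → ∀ i j, x i = x j) := by
  have hM : ∑ i, m i < 0 := by
    rw [← add_sum_erase _ _ (mem_univ 0)]
    linarith
  obtain ⟨μ, hμ, hμle⟩ := (univ.erase 0).exists_gt_forall_le m
    fun i hi => hm i (ne_of_mem_erase hi)
  have hc : 0 < -(∑ i, m i) * μ := mul_pos (neg_pos.2 hM) hμ
  refine ⟨-(∑ i, m i) * μ, hc, fun x => ?_⟩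
  have hweighted : μ * ∑ i ∈ univ.erase 0, ‖x i - x 0‖ ^ 2 ≤ ∑ i, m i * ‖x i - x 0‖ ^ 2 :=
    calc μ * ∑ i ∈ univ.erase 0, ‖x i - x 0‖ ^ 2
        = ∑ i ∈ univ.erase 0, μ * ‖x i - x 0‖ ^ 2 := mul_sum _ _ _
      _ ≤ ∑ i ∈ univ.erase 0, m i * ‖x i - x 0‖ ^ 2 :=
        sum_le_sum fun i hi => mul_le_mul_of_nonneg_right (hμle i hi) (sq_nonneg _)
      _ = ∑ i, m i * ‖x i - x 0‖ ^ 2 := sum_erase _ (by simp)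
  have hbound := ((sum_filter_lt_mul_mul_norm_sub_sq_le m x (x 0)).trans
    (mul_le_mul_of_nonpos_left hweighted hM.le)).trans_eq
    (by ring : _ = -(-(∑ i, m i) * μ) * ∑ i ∈ univ.erase 0, ‖x i - x 0‖ ^ 2)
  have hspread : 0 ≤ -(∑ i, m i) * μ * ∑ i ∈ univ.erase 0, ‖x i - x 0‖ ^ 2 :=
    mul_nonneg hc.le (sum_nonneg fun i _ => sq_nonneg _)
  refine ⟨by linarith, by linarith, fun hzero => ?_⟩
  exact eq_of_sum_erase_norm_sub_sq_nonpos x 0 (nonpos_of_mul_nonpos_right (by linarith) hc)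

theorem Itilde_negative_definite (k : ℕ) (m : Fin (k + 1) → ℝ)
    (hm0 : m 0 < 0) (hm : ∀ i, i ≠ 0 → 0 < m i)
    (hbig : -m 0 > ∑ i ∈ Finset.univ.erase 0, m i) :
    ∃ c > (0 : ℝ), ∀ x : Fin (k + 1) → EuclideanSpace ℝ (Fin 2),
      (∑ p ∈ Finset.univ.filter (fun p : Fin (k + 1) × Fin (k + 1) => p.1 < p.2),
          m p.1 * m p.2 * ‖x p.1 - x p.2‖ ^ 2
        ≤ -c * ∑ i ∈ Finset.univ.erase 0, ‖x i - x 0‖ ^ 2) ∧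
      (∑ p ∈ Finset.univ.filter (fun p : Fin (k + 1) × Fin (k + 1) => p.1 < p.2),
          m p.1 * m p.2 * ‖x p.1 - x p.2‖ ^ 2 ≤ 0) ∧
      ((∑ p ∈ Finset.univ.filter (fun p : Fin (k + 1) × Fin (k + 1) => p.1 < p.2),
          m p.1 * m p.2 * ‖x p.1 - x p.2‖ ^ 2 = 0) → ∀ i j, x i = x j) :=
  Itilde_negative_definite_general k m hm hbig
end
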